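/- Let K be the amalgamated sum over the common point 0 of compact pointed metric spaces (A_n, d_n): the disjoint union with 0 identified and d(a,b) = d_n(a,b) if a,b ∈ A_n, and d(a,b) = d_n(a,0) + d_m(b,0) if a ∈ A_n, b ∈ A_m, n ≠ m. Then F(K) is isometrically isomorphic to the ℓ1-sum ⊕_{ℓ1} F(A_n), via the adjoint of the map Φ : ⊕_{ℓ∞} Lip_0(A_n) → Lip_0(K) given by Φ((f_n))(x) = f_n(x) for x ∈ A_n, which is a surjective isometry and weak*-to-weak* homeomorphism. -/

import Mathlib

open Metric Set
open scoped NNReal ENNReal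

/-- The space of real-valued Lipschitz functions on `M` vanishing at the base point `z`. -/
structure Lip0 {M : Type*} [MetricSpace M] (z : M) where
  toFun : M → ℝ
  lipschitz' : ∃ K : ℝ≥0, LipschitzWith K toFun
  map_base' : toFun z = 0

namespace Lip0

variable {M : Type*} [MetricSpace M] {z : M}

instance : FunLike (Lip0 z) M ℝ where
  coe := Lip0.toFun
  coe_injective := by rintro ⟨f, _, _⟩ ⟨g, _, _⟩ h; simpa using h

@[simp] lemma coe_mk (f : M → ℝ) (h1 h2) : ⇑(⟨f, h1, h2⟩ : Lip0 z) = f := rfl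

lemma map_base (f : Lip0 z) : f z = 0 := f.map_base'

instance : Zero (Lip0 z) := ⟨⟨0, ⟨0, LipschitzWith.const (0 : ℝ)⟩, rfl⟩⟩

instance : Add (Lip0 z) :=
  ⟨fun f g => ⟨⇑f + ⇑g,
    ⟨f.lipschitz'.choose + g.lipschitz'.choose,
      f.lipschitz'.choose_spec.add g.lipschitz'.choose_spec⟩,
    by simp [map_base f, map_base g]⟩⟩

instance : Neg (Lip0 z) :=
  ⟨fun f => ⟨-⇑f, ⟨f.lipschitz'.choose, f.lipschitz'.choose_spec.neg⟩,
    by simp [map_base f]⟩⟩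

lemma lip_const_smul {f : M → ℝ} {K : ℝ≥0} (h : LipschitzWith K f) (c : ℝ) :
    LipschitzWith (‖c‖₊ * K) (c • f) := by
  rw [lipschitzWith_iff_dist_le_mul] at h ⊢
  intro x y
  calc dist ((c • f) x) ((c • f) y) = ‖c‖ * dist (f x) (f y) := by
        rw [Pi.smul_apply, Pi.smul_apply, dist_smul₀]
    _ ≤ ‖c‖ * (K * dist x y) := by
        apply mul_le_mul_of_nonneg_left (h x y) (norm_nonneg c)
    _ = (‖c‖₊ * K : ℝ≥0) * dist x y := by push_cast; ring

instance : SMul ℝ (Lip0 z) :=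
  ⟨fun c f => ⟨c • ⇑f,
    ⟨‖c‖₊ * f.lipschitz'.choose, lip_const_smul f.lipschitz'.choose_spec c⟩,
    by simp [map_base f]⟩⟩

instance : Sub (Lip0 z) := ⟨fun f g => f + -g⟩
instance : SMul ℕ (Lip0 z) := ⟨fun n f => (n : ℝ) • f⟩
instance : SMul ℤ (Lip0 z) := ⟨fun n f => (n : ℝ) • f⟩

@[simp] lemma coe_zero : ⇑(0 : Lip0 z) = 0 := rfl
@[simp] lemma coe_add (f g : Lip0 z) : ⇑(f + g) = ⇑f + ⇑g := rfl
@[simp] lemma coe_neg (f : Lip0 z) : ⇑(-f) = -⇑f := rfl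
@[simp] lemma coe_smul (c : ℝ) (f : Lip0 z) : ⇑(c • f) = c • ⇑f := rfl
@[simp] lemma coe_sub (f g : Lip0 z) : ⇑(f - g) = ⇑f - ⇑g := by
  show ⇑(f + -g) = _; ext x; simp [sub_eq_add_neg]

instance : AddCommGroup (Lip0 z) :=
  DFunLike.coe_injective.addCommGroup _ coe_zero coe_add coe_neg coe_sub
    (fun f n => by show ⇑((n : ℝ) • f) = _; ext x; simp)
    (fun f n => by show ⇑((n : ℝ) • f) = _; ext x; simp)

instance : Module ℝ (Lip0 z) := by
  refine Function.Injective.module ℝ (AddMonoidHom.mk' (fun (f : Lip0 z) => ⇑f) coe_add) ?_ ?_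
  · exact DFunLike.coe_injective
  · exact coe_smul

/-- The least Lipschitz constant. -/
noncomputable def lipConst (f : M → ℝ) : ℝ≥0 := sInf {K : ℝ≥0 | LipschitzWith K f}

lemma lipschitzWith_lipConst {f : M → ℝ} (h : ∃ K : ℝ≥0, LipschitzWith K f) :
    LipschitzWith (lipConst f) f := by
  rw [lipschitzWith_iff_dist_le_mul]
  intro x y
  rcases eq_or_ne x y with rfl | hxy
  · simp
  have hd : 0 < dist x y := dist_pos.2 hxy
  have h1 : (⟨dist (f x) (f y) / dist x y, by positivity⟩ : ℝ≥0) ≤ lipConst f := by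
    apply le_csInf h
    intro K hK
    refine NNReal.coe_le_coe.1 ?_
    have hK' := lipschitzWith_iff_dist_le_mul.1 hK
    exact (div_le_iff₀ hd).2 (by simpa [mul_comm] using hK' x y)
  replace h1 := NNReal.coe_le_coe.2 h1
  calc dist (f x) (f y) = dist (f x) (f y) / dist x y * dist x y := by field_simp
    _ ≤ (lipConst f : ℝ) * dist x y := by
        apply mul_le_mul_of_nonneg_right _ hd.le
        exact h1



lemma lipConst_le {f : M → ℝ} {K : ℝ≥0} (h : LipschitzWith K f) : lipConst f ≤ K :=
  csInf_le (OrderBot.bddBelow _) h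

lemma dist_le_lipConst (f : Lip0 z) (x y : M) :
    dist (f x) (f y) ≤ (lipConst ⇑f : ℝ) * dist x y :=
  lipschitzWith_iff_dist_le_mul.1 (lipschitzWith_lipConst f.lipschitz') x y

noncomputable instance : Norm (Lip0 z) := ⟨fun f => (lipConst ⇑f : ℝ)⟩

lemma norm_def (f : Lip0 z) : ‖f‖ = (lipConst ⇑f : ℝ) := rfl

lemma eq_zero_of_lipConst_eq_zero (f : Lip0 z) (h : lipConst ⇑f = 0) : f = 0 := by
  apply DFunLike.coe_injective
  ext x
  have h2 := dist_le_lipConst f x z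
  rw [h, map_base f] at h2
  simp only [NNReal.coe_zero, zero_mul] at h2
  have := dist_nonneg (x := f x) (y := (0:ℝ))
  simp only [coe_zero, Pi.zero_apply]
  have : dist (f x) (0:ℝ) = 0 := le_antisymm h2 dist_nonneg
  simpa [dist_eq_norm] using this

lemma lipConst_smul (c : ℝ) (f : Lip0 z) : lipConst ⇑(c • f) = ‖c‖₊ * lipConst ⇑f := by
  have le1 : ∀ (c : ℝ) (f : Lip0 z), lipConst ⇑(c • f) ≤ ‖c‖₊ * lipConst ⇑f := by
    intro c f
    exact lipConst_le (lip_const_smul (lipschitzWith_lipConst f.lipschitz') c)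
  rcases eq_or_ne c 0 with rfl | hc
  · simp only [nnnorm_zero, zero_mul]
    refine le_antisymm ?_ zero_le
    have : (0:ℝ) • f = (0 : Lip0 z) := zero_smul ℝ f
    calc lipConst ⇑((0:ℝ) • f) ≤ ‖(0:ℝ)‖₊ * lipConst ⇑f := le1 0 f
      _ = 0 := by simp
  · refine le_antisymm (le1 c f) ?_
    have h2 := le1 c⁻¹ (c • f)
    rw [inv_smul_smul₀ hc] at h2
    have hcpos : (0:ℝ≥0) < ‖c‖₊ := by simpa using hc
    calc ‖c‖₊ * lipConst ⇑f ≤ ‖c‖₊ * (‖c⁻¹‖₊ * lipConst ⇑(c • f)) := by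
          exact mul_le_mul_of_nonneg_left h2 zero_le
      _ = lipConst ⇑(c • f) := by
          rw [← mul_assoc]
          have : ‖c‖₊ * ‖c⁻¹‖₊ = 1 := by
            rw [← nnnorm_mul, mul_inv_cancel₀ hc, nnnorm_one]
          rw [this, one_mul]

noncomputable def addGroupNorm (z : M) : AddGroupNorm (Lip0 z) where
  toFun f := (lipConst ⇑f : ℝ)
  map_zero' := by
    simp only [coe_zero]
    norm_cast
    exact le_antisymm (lipConst_le (LipschitzWith.const' (0:ℝ))) zero_le
  add_le' f g := by
    push_cast
    have : lipConst ⇑(f + g) ≤ lipConst ⇑f + lipConst ⇑g := by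
      refine lipConst_le ?_
      exact (lipschitzWith_lipConst f.lipschitz').add (lipschitzWith_lipConst g.lipschitz')
    exact_mod_cast this
  neg' f := by
    have h : (-⇑f : M → ℝ) = ⇑((-1 : ℝ) • f) := by ext x; simp
    show (lipConst ⇑(-f) : ℝ) = (lipConst ⇑f : ℝ)
    rw [coe_neg, h, lipConst_smul]
    simp
  eq_zero_of_map_eq_zero' f h := by
    apply eq_zero_of_lipConst_eq_zero
    have h' : (lipConst ⇑f : ℝ) = 0 := h
    exact_mod_cast h'

noncomputable instance : NormedAddCommGroup (Lip0 z) :=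
  (addGroupNorm z).toNormedAddCommGroup

noncomputable instance : NormedSpace ℝ (Lip0 z) where
  norm_smul_le c f := by
    show (lipConst ⇑(c • f) : ℝ) ≤ ‖c‖ * (lipConst ⇑f : ℝ)
    rw [lipConst_smul]
    push_cast
    simp [Real.norm_eq_abs]

end Lip0

section FreeSpace

variable {M : Type*} [MetricSpace M]

/-- The evaluation functional `δ_x ∈ Lip_0(M)^*`. -/
noncomputable def dirac (z x : M) : StrongDual ℝ (Lip0 z) :=
  LinearMap.mkContinuous
    { toFun := fun f => f x
      map_add' := by intro f g; simp
      map_smul' := by intro c f; simp }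
    (dist x z)
    (by
      intro f
      have := Lip0.dist_le_lipConst f x z
      rw [Lip0.map_base f, dist_zero_right] at this
      exact (by simpa [Lip0.norm_def, mul_comm] using this :
        ‖f x‖ ≤ dist x z * (Lip0.lipConst ⇑f : ℝ)))

@[simp] lemma dirac_apply (z x : M) (f : Lip0 z) : dirac z x f = f x := rfl

/-- The Lipschitz-free space over `M` with base point `z`: the closed linear span of
the evaluation functionals inside `Lip_0(M)^*`. -/
noncomputable def FreeSpace (z : M) : Submodule ℝ (StrongDual ℝ (Lip0 z)) :=
  (Submodule.span ℝ (Set.range (dirac z))).topologicalClosure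

/-- The canonical embedding `δ : M → F(M)`. -/
noncomputable def diracF (z x : M) : FreeSpace z :=
  ⟨dirac z x, Submodule.le_topologicalClosure _ (Submodule.subset_span ⟨x, rfl⟩)⟩

end FreeSpace

section AmalgamAux

namespace Amalgam

set_option linter.unusedSectionVars false

variable {K : Type*} [MetricSpace K] {z : K} {S : ℕ → Set K}

lemma lip0_norm_le {M : Type*} [MetricSpace M] {w : M} {f : Lip0 w} {C : ℝ≥0}
    (h : LipschitzWith C ⇑f) : ‖f‖ ≤ C := by
  rw [Lip0.norm_def]
  exact_mod_cast Lip0.lipConst_le h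

/-- Restriction of a Lipschitz function to `S n`. -/
noncomputable def restr (hz : ∀ n, z ∈ S n) (n : ℕ) (g : Lip0 z) :
    Lip0 (⟨z, hz n⟩ : S n) where
  toFun x := g x.1
  lipschitz' := by
    obtain ⟨C, hC⟩ := g.lipschitz'
    refine ⟨C, lipschitzWith_iff_dist_le_mul.2 fun x y => ?_⟩
    have := lipschitzWith_iff_dist_le_mul.1 hC x.1 y.1
    simpa [Subtype.dist_eq] using (show dist (g x.1) (g y.1) ≤ C * dist x.1 y.1 from this)
  map_base' := g.map_base

@[simp] lemma restr_apply (hz : ∀ n, z ∈ S n) (n : ℕ) (g : Lip0 z) (x : S n) :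
    restr hz n g x = g x.1 := rfl

lemma restr_lipschitzWith (hz : ∀ n, z ∈ S n) (n : ℕ) {g : Lip0 z} {C : ℝ≥0}
    (h : LipschitzWith C ⇑g) : LipschitzWith C ⇑(restr hz n g) := by
  refine lipschitzWith_iff_dist_le_mul.2 fun x y => ?_
  have := lipschitzWith_iff_dist_le_mul.1 h x.1 y.1
  simpa [Subtype.dist_eq] using this

lemma norm_restr_le (hz : ∀ n, z ∈ S n) (n : ℕ) (g : Lip0 z) :
    ‖restr hz n g‖ ≤ ‖g‖ := by
  have := lip0_norm_le (restr_lipschitzWith hz n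
    (Lip0.lipschitzWith_lipConst g.lipschitz') (g := g))
  simpa [Lip0.norm_def] using this

lemma mem_some (hcover : (⋃ n, S n) = Set.univ) (x : K) : ∃ n, x ∈ S n := by
  have : x ∈ ⋃ n, S n := by rw [hcover]; trivial
  exact Set.mem_iUnion.1 this

noncomputable def idx (hcover : (⋃ n, S n) = Set.univ) (x : K) : ℕ :=
  (mem_some hcover x).choose

lemma idx_mem (hcover : (⋃ n, S n) = Set.univ) (x : K) : x ∈ S (idx hcover x) :=
  (mem_some hcover x).choose_spec

lemma consist (hz : ∀ n, z ∈ S n) (hinter : ∀ n m, n ≠ m → S n ∩ S m = {z})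
    (F : ∀ n, Lip0 (⟨z, hz n⟩ : S n)) {x : K} {n m : ℕ} (hxn : x ∈ S n) (hxm : x ∈ S m) :
    F n ⟨x, hxn⟩ = F m ⟨x, hxm⟩ := by
  rcases eq_or_ne n m with rfl | hnm
  · rfl
  · have hx : x = z := by
      have h1 := hinter n m hnm
      have h2 : x ∈ ({z} : Set K) := h1 ▸ ⟨hxn, hxm⟩
      simpa using h2
    subst hx
    exact ((F n).map_base).trans ((F m).map_base).symm

noncomputable def glueFun (hz : ∀ n, z ∈ S n) (hcover : (⋃ n, S n) = Set.univ)
    (F : ∀ n, Lip0 (⟨z, hz n⟩ : S n)) (x : K) : ℝ :=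
  F (idx hcover x) ⟨x, idx_mem hcover x⟩

lemma glueFun_eq (hz : ∀ n, z ∈ S n) (hcover : (⋃ n, S n) = Set.univ)
    (hinter : ∀ n m, n ≠ m → S n ∩ S m = {z})
    (F : ∀ n, Lip0 (⟨z, hz n⟩ : S n)) {x : K} {n : ℕ} (hx : x ∈ S n) :
    glueFun hz hcover F x = F n ⟨x, hx⟩ :=
  consist hz hinter F (idx_mem hcover x) hx

lemma glueFun_lipschitz (hz : ∀ n, z ∈ S n) (hcover : (⋃ n, S n) = Set.univ)
    (hinter : ∀ n m, n ≠ m → S n ∩ S m = {z})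
    (hadd : ∀ n m, n ≠ m → ∀ a ∈ S n, ∀ b ∈ S m, dist a b = dist a z + dist z b)
    (F : ∀ n, Lip0 (⟨z, hz n⟩ : S n)) {C : ℝ≥0}
    (hC : ∀ n, LipschitzWith C ⇑(F n)) : LipschitzWith C (glueFun hz hcover F) := by
  refine lipschitzWith_iff_dist_le_mul.2 fun x y => ?_
  set n := idx hcover x with hn
  set m := idx hcover y with hm
  have hxn : x ∈ S n := idx_mem hcover x
  have hym : y ∈ S m := idx_mem hcover y
  have ex : glueFun hz hcover F x = F n ⟨x, hxn⟩ := rfl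
  have ey : glueFun hz hcover F y = F m ⟨y, hym⟩ := rfl
  rcases eq_or_ne n m with h | h
  · have hyn : y ∈ S n := by rw [h]; exact hym
    rw [ex, ey, consist hz hinter F hym hyn]
    have := lipschitzWith_iff_dist_le_mul.1 (hC n) ⟨x, hxn⟩ ⟨y, hyn⟩
    simpa [Subtype.dist_eq] using this
  · rw [ex, ey]
    have b1 : dist (F n ⟨x, hxn⟩) 0 ≤ C * dist x z := by
      have h1 := lipschitzWith_iff_dist_le_mul.1 (hC n) ⟨x, hxn⟩ ⟨z, hz n⟩
      have h2 : F n ⟨z, hz n⟩ = 0 := (F n).map_base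
      rw [h2] at h1
      simpa [Subtype.dist_eq] using h1
    have b2 : dist (0 : ℝ) (F m ⟨y, hym⟩) ≤ C * dist z y := by
      have h1 := lipschitzWith_iff_dist_le_mul.1 (hC m) ⟨z, hz m⟩ ⟨y, hym⟩
      have h2 : F m ⟨z, hz m⟩ = 0 := (F m).map_base
      rw [h2] at h1
      simpa [Subtype.dist_eq] using h1
    calc dist (F n ⟨x, hxn⟩) (F m ⟨y, hym⟩)
        ≤ dist (F n ⟨x, hxn⟩) 0 + dist (0 : ℝ) (F m ⟨y, hym⟩) := dist_triangle _ _ _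
      _ ≤ C * dist x z + C * dist z y := add_le_add b1 b2
      _ = C * dist x y := by rw [hadd n m h x hxn y hym]; ring

noncomputable def glue (hz : ∀ n, z ∈ S n) (hcover : (⋃ n, S n) = Set.univ)
    (hinter : ∀ n m, n ≠ m → S n ∩ S m = {z})
    (hadd : ∀ n m, n ≠ m → ∀ a ∈ S n, ∀ b ∈ S m, dist a b = dist a z + dist z b)
    (F : ∀ n, Lip0 (⟨z, hz n⟩ : S n))
    (hF : ∃ C : ℝ≥0, ∀ n, LipschitzWith C ⇑(F n)) : Lip0 z where
  toFun := glueFun hz hcover F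
  lipschitz' := ⟨hF.choose, glueFun_lipschitz hz hcover hinter hadd F hF.choose_spec⟩
  map_base' := by
    rw [glueFun_eq hz hcover hinter F (hz 0)]
    exact (F 0).map_base

@[simp] lemma restr_glue (hz : ∀ n, z ∈ S n) (hcover : (⋃ n, S n) = Set.univ)
    (hinter : ∀ n m, n ≠ m → S n ∩ S m = {z})
    (hadd : ∀ n m, n ≠ m → ∀ a ∈ S n, ∀ b ∈ S m, dist a b = dist a z + dist z b)
    (F : ∀ n, Lip0 (⟨z, hz n⟩ : S n)) (hF : ∃ C : ℝ≥0, ∀ n, LipschitzWith C ⇑(F n)) (n : ℕ) :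
    restr hz n (glue hz hcover hinter hadd F hF) = F n := by
  apply DFunLike.coe_injective
  funext x
  show glueFun hz hcover F x.1 = F n x
  rw [glueFun_eq hz hcover hinter F x.2]

lemma lp_lip (hz : ∀ n, z ∈ S n) (F : lp (fun n => Lip0 (⟨z, hz n⟩ : S n)) ∞) (n : ℕ) :
    LipschitzWith ‖F‖₊ ⇑(F n) := by
  refine (Lip0.lipschitzWith_lipConst (F n).lipschitz').weaken ?_
  have h1 : ‖F n‖ ≤ ‖F‖ := lp.norm_apply_le_norm ENNReal.top_ne_zero F n
  rw [Lip0.norm_def] at h1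
  exact NNReal.coe_le_coe.1 (by simpa using h1 : ((Lip0.lipConst ⇑(F n) : ℝ) ≤ (‖F‖₊ : ℝ)))

/-- The gluing isometric isomorphism `Φ : ⊕_∞ Lip0 (S n) ≃ Lip0 K`. -/
noncomputable def Phi (hz : ∀ n, z ∈ S n) (hcover : (⋃ n, S n) = Set.univ)
    (hinter : ∀ n m, n ≠ m → S n ∩ S m = {z})
    (hadd : ∀ n m, n ≠ m → ∀ a ∈ S n, ∀ b ∈ S m, dist a b = dist a z + dist z b) :
    lp (fun n => Lip0 (⟨z, hz n⟩ : S n)) ∞ ≃ₗᵢ[ℝ] Lip0 z where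
  toFun F := glue hz hcover hinter hadd (fun n => F n) ⟨‖F‖₊, lp_lip hz F⟩
  invFun g := ⟨fun n => restr hz n g, memℓp_infty
    ⟨‖g‖, by rintro r ⟨n, rfl⟩; exact norm_restr_le hz n g⟩⟩
  map_add' F G := by
    apply DFunLike.coe_injective
    funext x
    show glueFun hz hcover (fun n => (F + G) n) x
      = glueFun hz hcover (fun n => F n) x + glueFun hz hcover (fun n => G n) x
    have h : (F + G) (idx hcover x) = F (idx hcover x) + G (idx hcover x) := by
      rw [lp.coeFn_add]; rfl
    show ((F + G) (idx hcover x)) ⟨x, idx_mem hcover x⟩ = _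
    rw [h]
    rfl
  map_smul' c F := by
    apply DFunLike.coe_injective
    funext x
    have h : (c • F) (idx hcover x) = c • (F (idx hcover x)) := by
      rw [lp.coeFn_smul]; rfl
    show ((c • F) (idx hcover x)) ⟨x, idx_mem hcover x⟩ = _
    rw [h]
    rfl
  left_inv F := by
    apply lp.ext
    funext n
    exact restr_glue hz hcover hinter hadd (fun n => F n) ⟨‖F‖₊, lp_lip hz F⟩ n
  right_inv g := by
    apply DFunLike.coe_injective
    funext x
    rfl
  norm_map' F := by
    apply le_antisymm
    · have h1 : Lip0.lipConst (glueFun hz hcover (fun n => F n)) ≤ ‖F‖₊ :=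
        Lip0.lipConst_le (glueFun_lipschitz hz hcover hinter hadd _ (lp_lip hz F))
      have h2 : (Lip0.lipConst (glueFun hz hcover (fun n => F n)) : ℝ) ≤ (‖F‖₊ : ℝ) := by
        exact_mod_cast h1
      exact h2.trans_eq (coe_nnnorm F)
    · refine lp.norm_le_of_forall_le (norm_nonneg _) fun n => ?_
      have h3 := restr_glue hz hcover hinter hadd (fun n => F n) ⟨‖F‖₊, lp_lip hz F⟩ n
      calc ‖F n‖ = ‖restr hz n (glue hz hcover hinter hadd (fun n => F n) ⟨‖F‖₊, lp_lip hz F⟩)‖ :=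
            by rw [h3]
        _ ≤ _ := norm_restr_le hz n _

lemma Phi_apply (hz : ∀ n, z ∈ S n) (hcover : (⋃ n, S n) = Set.univ)
    (hinter : ∀ n m, n ≠ m → S n ∩ S m = {z})
    (hadd : ∀ n m, n ≠ m → ∀ a ∈ S n, ∀ b ∈ S m, dist a b = dist a z + dist z b)
    (F : lp (fun n => Lip0 (⟨z, hz n⟩ : S n)) ∞) (n : ℕ) (x : S n) :
    Phi hz hcover hinter hadd F (x : K) = F n x := by
  show glueFun hz hcover (fun n => F n) x.1 = F n x
  rw [glueFun_eq hz hcover hinter _ x.2]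

lemma restr_Phi (hz : ∀ n, z ∈ S n) (hcover : (⋃ n, S n) = Set.univ)
    (hinter : ∀ n m, n ≠ m → S n ∩ S m = {z})
    (hadd : ∀ n m, n ≠ m → ∀ a ∈ S n, ∀ b ∈ S m, dist a b = dist a z + dist z b)
    (F : lp (fun n => Lip0 (⟨z, hz n⟩ : S n)) ∞) (n : ℕ) :
    restr hz n (Phi hz hcover hinter hadd F) = F n :=
  restr_glue hz hcover hinter hadd (fun n => F n) ⟨‖F‖₊, lp_lip hz F⟩ n

noncomputable instance freeSpace_completeSpace {M : Type*} [MetricSpace M] (w : M) :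
    CompleteSpace ↥(FreeSpace w) :=
  (Submodule.isClosed_topologicalClosure _).completeSpace_coe

noncomputable instance freeSpace_continuousAdd {M : Type*} [MetricSpace M] (w : M) :
    ContinuousAdd ↥(FreeSpace w) := by
  have h : IsTopologicalAddGroup ↥(FreeSpace w) := inferInstance
  exact h.toContinuousAdd

/-- Restriction as a continuous linear map. -/
noncomputable def restrL (hz : ∀ n, z ∈ S n) (n : ℕ) :
    Lip0 z →L[ℝ] Lip0 (⟨z, hz n⟩ : S n) :=
  LinearMap.mkContinuous
    { toFun := restr hz n
      map_add' := fun f g => by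
        apply DFunLike.coe_injective; funext x; simp
      map_smul' := fun c f => by
        apply DFunLike.coe_injective; funext x; simp }
    1 (fun g => by rw [one_mul]; exact norm_restr_le hz n g)

@[simp] lemma restrL_apply (hz : ∀ n, z ∈ S n) (n : ℕ) (g : Lip0 z) :
    restrL hz n g = restr hz n g := rfl

lemma norm_restrL_le (hz : ∀ n, z ∈ S n) (n : ℕ) : ‖restrL hz n‖ ≤ 1 :=
  LinearMap.mkContinuous_norm_le _ zero_le_one _

/-- The adjoint embedding of duals. -/
noncomputable def embDL (hz : ∀ n, z ∈ S n) (n : ℕ) :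
    StrongDual ℝ (Lip0 (⟨z, hz n⟩ : S n)) →L[ℝ] StrongDual ℝ (Lip0 z) :=
  LinearMap.mkContinuous
    { toFun := fun μ => μ.comp (restrL hz n)
      map_add' := fun μ ν => ContinuousLinearMap.add_comp μ ν _
      map_smul' := fun c μ => ContinuousLinearMap.smul_comp c μ _ }
    1 (fun μ => by
      rw [one_mul]
      calc ‖μ.comp (restrL hz n)‖ ≤ ‖μ‖ * ‖restrL hz n‖ :=
            ContinuousLinearMap.opNorm_comp_le _ _
        _ ≤ ‖μ‖ * 1 := by
            exact mul_le_mul_of_nonneg_left (norm_restrL_le hz n) (norm_nonneg μ)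
        _ = ‖μ‖ := mul_one _)

@[simp] lemma embDL_apply (hz : ∀ n, z ∈ S n) (n : ℕ)
    (μ : StrongDual ℝ (Lip0 (⟨z, hz n⟩ : S n))) (g : Lip0 z) :
    embDL hz n μ g = μ (restr hz n g) := rfl

lemma norm_embDL_apply_le (hz : ∀ n, z ∈ S n) (n : ℕ)
    (μ : StrongDual ℝ (Lip0 (⟨z, hz n⟩ : S n))) : ‖embDL hz n μ‖ ≤ ‖μ‖ := by
  calc ‖embDL hz n μ‖ ≤ ‖embDL hz n‖ * ‖μ‖ := (embDL hz n).le_opNorm μ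
    _ ≤ 1 * ‖μ‖ := mul_le_mul_of_nonneg_right
        (LinearMap.mkContinuous_norm_le _ zero_le_one _) (norm_nonneg μ)
    _ = ‖μ‖ := one_mul _

lemma embDL_dirac (hz : ∀ n, z ∈ S n) (n : ℕ) (x : S n) :
    embDL hz n (dirac (⟨z, hz n⟩ : S n) x) = dirac z x.1 := by
  apply ContinuousLinearMap.ext
  intro g
  rfl

lemma embDL_mem (hz : ∀ n, z ∈ S n) (n : ℕ)
    {μ : StrongDual ℝ (Lip0 (⟨z, hz n⟩ : S n))}
    (hμ : μ ∈ FreeSpace (⟨z, hz n⟩ : S n)) : embDL hz n μ ∈ FreeSpace z := by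
  have hsub : Submodule.span ℝ (Set.range (dirac (⟨z, hz n⟩ : S n))) ≤
      (FreeSpace z).comap (embDL hz n : _ →ₗ[ℝ] _) := by
    rw [Submodule.span_le]
    rintro _ ⟨x, rfl⟩
    simp only [SetLike.mem_coe, Submodule.mem_comap]
    show embDL hz n (dirac _ x) ∈ FreeSpace z
    rw [embDL_dirac]
    exact Submodule.le_topologicalClosure _ (Submodule.subset_span ⟨x.1, rfl⟩)
  have hclosed : IsClosed (((FreeSpace z).comap (embDL hz n : _ →ₗ[ℝ] _) :
      Submodule ℝ (StrongDual ℝ (Lip0 (⟨z, hz n⟩ : S n)))) : Set (StrongDual ℝ (Lip0 (⟨z, hz n⟩ : S n)))) :=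
    (Submodule.isClosed_topologicalClosure (Submodule.span ℝ (Set.range (dirac z)))).preimage
      (embDL hz n).continuous
  exact Submodule.topologicalClosure_minimal _ hsub hclosed hμ

/-- The embedding of free spaces over the pieces into the free space over `K`. -/
noncomputable def embSub (hz : ∀ n, z ∈ S n) (n : ℕ) :
    ↥(FreeSpace (⟨z, hz n⟩ : S n)) →L[ℝ] ↥(FreeSpace z) :=
  ((embDL hz n).comp (FreeSpace (⟨z, hz n⟩ : S n)).subtypeL).codRestrict _
    (fun μ => embDL_mem hz n μ.2)

@[simp] lemma embSub_coe (hz : ∀ n, z ∈ S n) (n : ℕ) (μ : ↥(FreeSpace (⟨z, hz n⟩ : S n))) :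
    (embSub hz n μ : StrongDual ℝ (Lip0 z)) = embDL hz n μ.1 := rfl

lemma norm_embSub_apply_le (hz : ∀ n, z ∈ S n) (n : ℕ) (μ : ↥(FreeSpace (⟨z, hz n⟩ : S n))) :
    ‖embSub hz n μ‖ ≤ ‖μ‖ :=
  norm_embDL_apply_le hz n μ.1

lemma lp_one_norm {E : ℕ → Type*} [∀ n, NormedAddCommGroup (E n)] (f : lp E 1) :
    ‖f‖ = ∑' n, ‖f n‖ := by
  rw [lp.norm_eq_tsum_rpow (by norm_num) f]
  simp [ENNReal.toReal_one]

lemma lp_one_summable {E : ℕ → Type*} [∀ n, NormedAddCommGroup (E n)] (f : lp E 1) :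
    Summable fun n => ‖f n‖ := by
  have h := lp.hasSum_norm (p := 1) (by norm_num) f
  simpa [ENNReal.toReal_one] using h.summable

lemma T_summable (hz : ∀ n, z ∈ S n)
    (μ : lp (fun n => ↥(FreeSpace (⟨z, hz n⟩ : S n))) 1) :
    Summable fun n => embSub hz n (μ n) :=
  Summable.of_norm_bounded (E := ↥(FreeSpace z)) (lp_one_summable μ) (fun n => norm_embSub_apply_le hz n (μ n))

set_option maxHeartbeats 2000000 in
lemma T_norm (hz : ∀ n, z ∈ S n) (hcover : (⋃ n, S n) = Set.univ)
    (hinter : ∀ n m, n ≠ m → S n ∩ S m = {z})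
    (hadd : ∀ n m, n ≠ m → ∀ a ∈ S n, ∀ b ∈ S m, dist a b = dist a z + dist z b)
    (μ : lp (fun n => ↥(FreeSpace (⟨z, hz n⟩ : S n))) 1) :
    ‖∑' n, embSub hz n (μ n)‖ = ‖μ‖ := by
  have hs := lp_one_summable μ
  have hs2 : Summable fun n => ‖embSub hz n (μ n)‖ :=
    hs.of_nonneg_of_le (fun n => norm_nonneg (embSub hz n (μ n))) (fun n => norm_embSub_apply_le hz n (μ n))
  rw [lp_one_norm μ]
  apply le_antisymm
  · calc ‖∑' n, embSub hz n (μ n)‖ ≤ ∑' n, ‖embSub hz n (μ n)‖ := norm_tsum_le_tsum_norm hs2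
      _ ≤ ∑' n, ‖μ n‖ := Summable.tsum_le_tsum (fun n => norm_embSub_apply_le hz n (μ n)) hs2 hs
  · by_contra hcon
    push_neg at hcon
    set Tn := ‖∑' n, embSub hz n (μ n)‖ with hTn
    set ε := (∑' n, ‖μ n‖) - Tn with hε
    have hεpos : 0 < ε := by rw [hε]; linarith
    obtain ⟨N, hN⟩ : ∃ N, (∑' n, ‖μ n‖) - ε / 2 < ∑ n ∈ Finset.range N, ‖μ n‖ :=
      (((hs.hasSum.tendsto_sum_nat).eventually (eventually_gt_nhds (by linarith))).exists)
    set δ := ε / (2 * ((N : ℝ) + 1)) with hδ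
    have hδpos : 0 < δ := by rw [hδ]; positivity
    have key : ∀ n, ∃ g : Lip0 (⟨z, hz n⟩ : S n), ‖g‖ ≤ 1 ∧
        ‖μ n‖ - δ ≤ (μ n : StrongDual ℝ (Lip0 (⟨z, hz n⟩ : S n))) g := by
      intro n
      have hlt' : ‖μ n‖ - δ < ‖(μ n : StrongDual ℝ (Lip0 (⟨z, hz n⟩ : S n)))‖ := by
        have he : ‖μ n‖ = ‖(μ n : StrongDual ℝ (Lip0 (⟨z, hz n⟩ : S n)))‖ :=
          Submodule.coe_norm (μ n)
        linarith
      obtain ⟨g, hg1, hg2⟩ := ContinuousLinearMap.exists_lt_apply_of_lt_opNorm _ hlt'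
      rcases le_or_gt 0 ((μ n : StrongDual ℝ (Lip0 (⟨z, hz n⟩ : S n))) g)
        with hpos | hneg
      · refine ⟨g, hg1.le, ?_⟩
        rw [Real.norm_eq_abs, abs_of_nonneg hpos] at hg2
        linarith
      · refine ⟨-g, by have := hg1.le; rw [← norm_neg] at this; exact this, ?_⟩
        rw [map_neg]
        rw [Real.norm_eq_abs, abs_of_neg hneg] at hg2
        linarith
    choose gs hgs1 hgs2 using key
    have hmem : Memℓp (fun n => if n < N then gs n else 0 :
        ∀ n, Lip0 (⟨z, hz n⟩ : S n)) ∞ := memℓp_infty ⟨1, by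
      rintro r ⟨n, rfl⟩
      by_cases h : n < N
      · simp only [h, ↓reduceIte]; exact hgs1 n
      · simp [h]⟩
    set F : lp (fun n => Lip0 (⟨z, hz n⟩ : S n)) ∞ := ⟨_, hmem⟩ with hF
    have hFapp : ∀ n, F n = if n < N then gs n else 0 := fun n => rfl
    have hFnorm : ‖F‖ ≤ 1 := lp.norm_le_of_forall_le zero_le_one (fun n => by
      rw [hFapp n]
      by_cases h : n < N
      · simp only [h, ↓reduceIte]; exact hgs1 n
      · simp [h])
    set g := Phi hz hcover hinter hadd F with hgdef
    have hgnorm : ‖g‖ ≤ 1 := by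
      exact ((Phi hz hcover hinter hadd).norm_map F).trans_le hFnorm
    have hval : (((∑' n, embSub hz n (μ n) : ↥(FreeSpace z)) :
        StrongDual ℝ (Lip0 z)) g)
        = ∑' n, (μ n : StrongDual ℝ (Lip0 (⟨z, hz n⟩ : S n))) (restr hz n g) := by
      have h1 := ContinuousLinearMap.map_tsum
        ((ContinuousLinearMap.apply ℝ ℝ g).comp (FreeSpace z).subtypeL)
        (T_summable hz μ)
      simpa [ContinuousLinearMap.comp_apply, ContinuousLinearMap.apply_apply,
        Submodule.subtypeL_apply] using h1
    have hterm : ∀ n, (μ n : StrongDual ℝ (Lip0 (⟨z, hz n⟩ : S n))) (restr hz n g) =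
        if n < N then (μ n : StrongDual ℝ (Lip0 (⟨z, hz n⟩ : S n))) (gs n) else 0 := by
      intro n
      have hr : restr hz n g = F n := by
        rw [hgdef]; exact restr_Phi hz hcover hinter hadd F n
      rw [hr, hFapp n]
      by_cases h : n < N
      · rw [if_pos h, if_pos h]
      · rw [if_neg h, if_neg h, map_zero]
    have hsum_eval : (((∑' n, embSub hz n (μ n) : ↥(FreeSpace z)) :
        StrongDual ℝ (Lip0 z)) g)
        = ∑ n ∈ Finset.range N, (μ n : StrongDual ℝ (Lip0 (⟨z, hz n⟩ : S n))) (gs n) := by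
      rw [hval, tsum_eq_sum (s := Finset.range N) (fun n hn => by
        rw [hterm n, if_neg (by simpa using hn)])]
      exact Finset.sum_congr rfl (fun n hn => by rw [hterm n, if_pos (Finset.mem_range.1 hn)])
    have hb1 : (∑ n ∈ Finset.range N, ‖μ n‖) - N * δ ≤
        ∑ n ∈ Finset.range N, (μ n : StrongDual ℝ (Lip0 (⟨z, hz n⟩ : S n))) (gs n) := by
      have h2 : ∑ n ∈ Finset.range N, (‖μ n‖ - δ) ≤
          ∑ n ∈ Finset.range N, (μ n : StrongDual ℝ (Lip0 (⟨z, hz n⟩ : S n))) (gs n) :=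
        Finset.sum_le_sum (fun n _ => hgs2 n)
      have h3 : ∑ n ∈ Finset.range N, (‖μ n‖ - δ) =
          (∑ n ∈ Finset.range N, ‖μ n‖) - N * δ := by
        rw [Finset.sum_sub_distrib]
        simp [mul_comm]
      linarith
    have hb2 : (((∑' n, embSub hz n (μ n) : ↥(FreeSpace z)) :
        StrongDual ℝ (Lip0 z)) g) ≤ Tn := by
      have h1 := ContinuousLinearMap.le_opNorm
        ((∑' n, embSub hz n (μ n) : ↥(FreeSpace z)) : StrongDual ℝ (Lip0 z)) g
      have h2 : ‖((∑' n, embSub hz n (μ n) : ↥(FreeSpace z)) :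
          StrongDual ℝ (Lip0 z))‖ = Tn := (Submodule.coe_norm _).symm
      have h3 := le_abs_self ((((∑' n, embSub hz n (μ n) : ↥(FreeSpace z)) :
          StrongDual ℝ (Lip0 z))) g)
      rw [Real.norm_eq_abs] at h1
      have h4 := h1.trans (mul_le_mul_of_nonneg_left hgnorm (norm_nonneg _))
      nlinarith [norm_nonneg g, ContinuousLinearMap.opNorm_nonneg
        ((∑' n, embSub hz n (μ n) : ↥(FreeSpace z)) : StrongDual ℝ (Lip0 z))]
    have hNδ : (N : ℝ) * δ ≤ ε / 2 := by
      have h2 : ((N : ℝ) + 1) * δ = ε / 2 := by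
        rw [hδ]; field_simp
      nlinarith [hδpos.le]
    linarith [hN, hb1, hb2, hNδ, hsum_eval]

set_option maxHeartbeats 2000000 in
set_option synthInstance.maxHeartbeats 400000 in
/-- The `ℓ¹`-sum map into the free space, as a linear isometry. -/
noncomputable def Tli (hz : ∀ n, z ∈ S n) (hcover : (⋃ n, S n) = Set.univ)
    (hinter : ∀ n m, n ≠ m → S n ∩ S m = {z})
    (hadd : ∀ n m, n ≠ m → ∀ a ∈ S n, ∀ b ∈ S m, dist a b = dist a z + dist z b) :
    lp (fun n => ↥(FreeSpace (⟨z, hz n⟩ : S n))) 1 →ₗᵢ[ℝ] ↥(FreeSpace z) where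
  toFun μ := ∑' n, embSub hz n (μ n)
  map_add' μ ν := by
    have h : ∀ n, embSub hz n ((μ + ν) n) = embSub hz n (μ n) + embSub hz n (ν n) := by
      intro n
      have he : (μ + ν) n = μ n + ν n := by rw [lp.coeFn_add]; rfl
      rw [he, map_add]
    calc (∑' n, embSub hz n ((μ + ν) n))
        = ∑' n, (embSub hz n (μ n) + embSub hz n (ν n)) := by simp_rw [h]
      _ = _ := Summable.tsum_add (T_summable hz μ) (T_summable hz ν)
  map_smul' c μ := by
    have h : ∀ n, embSub hz n ((c • μ) n) = c • embSub hz n (μ n) := by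
      intro n
      have he : (c • μ) n = c • μ n := by rw [lp.coeFn_smul]; rfl
      rw [he, map_smul]
    simp only [RingHom.id_apply]
    calc (∑' n, embSub hz n ((c • μ) n)) = ∑' n, c • embSub hz n (μ n) := by simp_rw [h]
      _ = c • ∑' n, embSub hz n (μ n) := Summable.tsum_const_smul c (T_summable hz μ)
  norm_map' μ := T_norm hz hcover hinter hadd μ

set_option maxHeartbeats 2000000 in
set_option synthInstance.maxHeartbeats 400000 in
lemma Tli_apply (hz : ∀ n, z ∈ S n) (hcover : (⋃ n, S n) = Set.univ)
    (hinter : ∀ n m, n ≠ m → S n ∩ S m = {z})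
    (hadd : ∀ n m, n ≠ m → ∀ a ∈ S n, ∀ b ∈ S m, dist a b = dist a z + dist z b)
    (μ : lp (fun n => ↥(FreeSpace (⟨z, hz n⟩ : S n))) 1) :
    Tli hz hcover hinter hadd μ = ∑' n, embSub hz n (μ n) := rfl

set_option maxHeartbeats 2000000 in
set_option synthInstance.maxHeartbeats 400000 in
lemma T_dirac (hz : ∀ n, z ∈ S n) (hcover : (⋃ n, S n) = Set.univ)
    (hinter : ∀ n m, n ≠ m → S n ∩ S m = {z})
    (hadd : ∀ n m, n ≠ m → ∀ a ∈ S n, ∀ b ∈ S m, dist a b = dist a z + dist z b)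
    (x : K) :
    Tli hz hcover hinter hadd (lp.single 1 (idx hcover x)
      (diracF (⟨z, hz (idx hcover x)⟩ : S (idx hcover x)) ⟨x, idx_mem hcover x⟩))
      = diracF z x := by
  set n := idx hcover x with hn
  set v := diracF (⟨z, hz n⟩ : S n) ⟨x, idx_mem hcover x⟩ with hv
  rw [Tli_apply]
  rw [tsum_eq_single n (fun m hm => by
    rw [lp.single_apply_ne 1 n _ hm, map_zero])]
  rw [lp.single_apply_self]
  apply Subtype.ext
  rw [embSub_coe]
  exact embDL_dirac hz n ⟨x, idx_mem hcover x⟩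

set_option maxHeartbeats 2000000 in
set_option synthInstance.maxHeartbeats 400000 in
lemma T_surj (hz : ∀ n, z ∈ S n) (hcover : (⋃ n, S n) = Set.univ)
    (hinter : ∀ n m, n ≠ m → S n ∩ S m = {z})
    (hadd : ∀ n m, n ≠ m → ∀ a ∈ S n, ∀ b ∈ S m, dist a b = dist a z + dist z b) :
    Function.Surjective (Tli hz hcover hinter hadd) := by
  intro w
  set T := Tli hz hcover hinter hadd with hT
  set Q : Submodule ℝ (StrongDual ℝ (Lip0 z)) :=
    Submodule.map (FreeSpace z).subtype (LinearMap.range T.toLinearMap) with hQ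
  have hQclosed : IsClosed (Q : Set (StrongDual ℝ (Lip0 z))) := by
    have hiso : Isometry (fun μ => ((T μ : ↥(FreeSpace z)) : StrongDual ℝ (Lip0 z))) :=
      isometry_subtype_coe.comp T.isometry
    have heq : (Q : Set (StrongDual ℝ (Lip0 z))) =
        Set.range (fun μ => ((T μ : ↥(FreeSpace z)) : StrongDual ℝ (Lip0 z))) := by
      ext v
      constructor
      · rintro ⟨u, hu, rfl⟩
        obtain ⟨μ, rfl⟩ := hu
        exact ⟨μ, rfl⟩
      · rintro ⟨μ, rfl⟩
        exact ⟨T μ, ⟨μ, rfl⟩, rfl⟩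
    rw [heq]
    exact hiso.isClosedEmbedding.isClosed_range
  have hspan : Submodule.span ℝ (Set.range (dirac z)) ≤ Q := by
    rw [Submodule.span_le]
    rintro _ ⟨x, rfl⟩
    refine ⟨T (lp.single 1 (idx hcover x)
      (diracF (⟨z, hz (idx hcover x)⟩ : S (idx hcover x)) ⟨x, idx_mem hcover x⟩)),
      ⟨_, rfl⟩, ?_⟩
    rw [hT, T_dirac hz hcover hinter hadd x]
    rfl
  have hw : (w : StrongDual ℝ (Lip0 z)) ∈ Q :=
    Submodule.topologicalClosure_minimal _ hspan hQclosed w.2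
  obtain ⟨u, hu, hval⟩ := hw
  obtain ⟨μ, rfl⟩ := hu
  exact ⟨μ, Subtype.ext hval⟩

end Amalgam

end AmalgamAux

section Statement15

/-- for the amalgamated sum `K` of compact pointed metric spaces `(A_n)` over the
common base point, the gluing map `Φ : ⊕_{ℓ∞} Lip_0(A_n) → Lip_0(K)` is a surjective linear
isometry, and `F(K)` is isometrically isomorphic to the `ℓ_1`-sum `⊕_{ℓ1} F(A_n)`. -/
theorem freeSpace_amalgam_ell1_sum {K : Type*} [MetricSpace K] [CompactSpace K] (z : K)
    (S : ℕ → Set K) (hScompact : ∀ n, IsCompact (S n)) (hz : ∀ n, z ∈ S n)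
    (hcover : (⋃ n, S n) = Set.univ)
    (hinter : ∀ n m, n ≠ m → S n ∩ S m = {z})
    (hadd : ∀ n m, n ≠ m → ∀ a ∈ S n, ∀ b ∈ S m, dist a b = dist a z + dist z b) :
    (∃ Φ : lp (fun n => Lip0 (⟨z, hz n⟩ : S n)) ∞ ≃ₗᵢ[ℝ] Lip0 z,
      ∀ (F : lp (fun n => Lip0 (⟨z, hz n⟩ : S n)) ∞) (n : ℕ) (x : S n),
        Φ F (x : K) = F n x) ∧
    Nonempty (↥(FreeSpace z) ≃ₗᵢ[ℝ] lp (fun n => ↥(FreeSpace (⟨z, hz n⟩ : S n))) 1) := by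
  constructor
  · exact ⟨Amalgam.Phi hz hcover hinter hadd,
      fun F n x => Amalgam.Phi_apply hz hcover hinter hadd F n x⟩
  · exact ⟨(LinearIsometryEquiv.ofSurjective (Amalgam.Tli hz hcover hinter hadd)
      (Amalgam.T_surj hz hcover hinter hadd)).symm⟩

end Statement15
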